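/- For each m ∈ ℤ, multi-index ν, and smooth function G on an open subset of (ℝ∖{0})^d, the function x^{m+ν} G^{(ν)}(x) can be written as a linear combination of the functions (x^{m+j} G(x))^{(j)} with 0 ≤ j_i ≤ ν_i for all i. -/

import Mathlib

open MeasureTheory
noncomputable section

def Test (d : ℕ) : Submodule ℝ ((Fin d → ℝ) → ℝ) where
  carrier := {f | ContDiff ℝ (⊤ : ℕ∞) f ∧ HasCompactSupport f}
  add_mem' := fun hf hg => ⟨hf.1.add hg.1, hf.2.add hg.2⟩
  zero_mem' := ⟨contDiff_const, by
    simp [HasCompactSupport, tsupport, Function.support]⟩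
  smul_mem' := fun c f hf => ⟨contDiff_const.smul hf.1, hf.2.mono (Function.support_const_smul_subset c f)⟩

abbrev Dstn (d : ℕ) := Test d →ₗ[ℝ] ℝ

/-- monomial as a distribution -/
def monoDist (d : ℕ) (α : Fin d → ℕ) : Dstn d where
  toFun φ := ∫ x, (∏ j, x j ^ α j) * φ.1 x
  map_add' φ ψ := by
    have h1 : Integrable (fun x : Fin d → ℝ => (∏ j, x j ^ α j) * φ.1 x) := by
      apply Continuous.integrable_of_hasCompactSupport
      · exact (continuous_finset_prod _ fun j _ => (continuous_apply j).pow _).mul φ.2.1.continuous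
      · exact φ.2.2.mul_left
    have h2 : Integrable (fun x : Fin d → ℝ => (∏ j, x j ^ α j) * ψ.1 x) := by
      apply Continuous.integrable_of_hasCompactSupport
      · exact (continuous_finset_prod _ fun j _ => (continuous_apply j).pow _).mul ψ.2.1.continuous
      · exact ψ.2.2.mul_left
    simp only [Submodule.coe_add, Pi.add_apply, mul_add]
    rw [integral_add h1 h2]
  map_smul' c φ := by
    simp only [SetLike.val_smul, Pi.smul_apply, smul_eq_mul, RingHom.id_apply]
    rw [← integral_const_mul]
    congr 1; funext x; ring

/-- the sign `σ(a) = ∏ a_j/|a_j|` -/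
def sgn {d : ℕ} (a : Fin d → ℝ) : ℝ := ∏ j, a j / |a j|

lemma scale_mem_test {d : ℕ} (a : Fin d → ℝ) (ha : ∀ j, a j ≠ 0) (φ : Test d) :
    (fun x : Fin d → ℝ => φ.1 (fun j => x j / a j)) ∈ Test d := by
  constructor
  · exact φ.2.1.comp (contDiff_pi.mpr fun j =>
      ((ContinuousLinearMap.proj j : (Fin d → ℝ) →L[ℝ] ℝ).contDiff).div_const _)
  · let e : (Fin d → ℝ) ≃ₜ (Fin d → ℝ) :=
      Homeomorph.piCongrRight (fun j => Homeomorph.mulRight₀ (a j)⁻¹ (inv_ne_zero (ha j)))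
    have he : (fun x : Fin d → ℝ => φ.1 (fun j => x j / a j)) = φ.1 ∘ e := by
      funext x
      show φ.1 _ = φ.1 _
      congr 1
    rw [he]
    exact φ.2.2.comp_homeomorph e

/-- transpose of dilation on test functions -/
def dilTestMap {d : ℕ} (a : Fin d → ℝ) (ha : ∀ j, a j ≠ 0) : Test d →ₗ[ℝ] Test d where
  toFun φ := ⟨fun x => (sgn a / ∏ j, a j) * φ.1 (fun j => x j / a j),
    Submodule.smul_mem _ (sgn a / ∏ j, a j) (scale_mem_test a ha φ)⟩
  map_add' φ ψ := by ext x; simp [mul_add]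
  map_smul' c φ := by ext x; simp; ring

/-- dilation operator `D_a` on distributions -/
def dil {d : ℕ} (a : Fin d → ℝ) (ha : ∀ j, a j ≠ 0) : Dstn d →ₗ[ℝ] Dstn d :=
  LinearMap.lcomp ℝ ℝ (dilTestMap a ha)

section Derivs
variable {E : Type*} [NormedAddCommGroup E] [NormedSpace ℝ E]

/-- partial derivative `∂_j` -/
def pd {d : ℕ} (j : Fin d) (f : (Fin d → ℝ) → E) : (Fin d → ℝ) → E :=
  fun x => fderiv ℝ f x (Pi.single j 1)

/-- multi-index partial derivative `∂^ν` -/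
def mpd {d : ℕ} (ν : Fin d → ℕ) (f : (Fin d → ℝ) → E) : (Fin d → ℝ) → E :=
  (List.finRange d).foldr (fun j g => (pd j)^[ν j] g) f

/-- formal adjoint `θ_j^* = -∂_j ∘ x_j` of the Euler derivative `θ_j = x_j ∂_j` -/
def eulerStar {d : ℕ} (j : Fin d) (f : (Fin d → ℝ) → E) : (Fin d → ℝ) → E :=
  fun x => -pd j (fun y => y j • f y) x

/-- iterated formal adjoint `(θ^*)^β` of the Euler derivative -/
def eulerStarPow {d : ℕ} (β : Fin d → ℕ) (f : (Fin d → ℝ) → E) : (Fin d → ℝ) → E :=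
  (List.finRange d).foldr (fun j g => (eulerStar j)^[β j] g) f

end Derivs


section MonomialDerivHelpers

variable {d : ℕ} {U : Set (Fin d → ℝ)}

/-- `mpd` restricted to a list of coordinates. -/
def mpdL (l : List (Fin d)) (ν : Fin d → ℕ) (f : (Fin d → ℝ) → ℝ) : (Fin d → ℝ) → ℝ :=
  l.foldr (fun j g => (pd j)^[ν j] g) f

lemma mpd_eq_mpdL (ν : Fin d → ℕ) (f : (Fin d → ℝ) → ℝ) :
    mpd ν f = mpdL (List.finRange d) ν f := rfl

lemma pd_contDiffOn (hU : IsOpen U) {f : (Fin d → ℝ) → ℝ}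
    (hf : ContDiffOn ℝ (⊤ : ℕ∞) f U) (j : Fin d) : ContDiffOn ℝ (⊤ : ℕ∞) (pd j f) U :=
  (hf.fderiv_of_isOpen hU (by simp)).clm_apply contDiffOn_const

lemma pdIter_contDiffOn (hU : IsOpen U) (j : Fin d) (n : ℕ) {f : (Fin d → ℝ) → ℝ}
    (hf : ContDiffOn ℝ (⊤ : ℕ∞) f U) : ContDiffOn ℝ (⊤ : ℕ∞) ((pd j)^[n] f) U := by
  induction n generalizing f with
  | zero => exact hf
  | succ n ih => rw [Function.iterate_succ_apply]; exact ih (pd_contDiffOn hU hf j)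

lemma mpdL_contDiffOn (hU : IsOpen U) (l : List (Fin d)) (ν : Fin d → ℕ)
    {f : (Fin d → ℝ) → ℝ} (hf : ContDiffOn ℝ (⊤ : ℕ∞) f U) : ContDiffOn ℝ (⊤ : ℕ∞) (mpdL l ν f) U := by
  induction l with
  | nil => exact hf
  | cons i l ih => exact pdIter_contDiffOn hU i (ν i) ih

lemma diffAt_of (hU : IsOpen U) {f : (Fin d → ℝ) → ℝ} (hf : ContDiffOn ℝ (⊤ : ℕ∞) f U)
    {x : Fin d → ℝ} (hx : x ∈ U) : DifferentiableAt ℝ f x :=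
  (hf.contDiffAt (hU.mem_nhds hx)).differentiableAt (by simp)

lemma pd_eqOn (hU : IsOpen U) {f g : (Fin d → ℝ) → ℝ} (h : Set.EqOn f g U) (j : Fin d) :
    Set.EqOn (pd j f) (pd j g) U := fun x hx => by
  unfold pd
  rw [(h.eventuallyEq_of_mem (hU.mem_nhds hx)).fderiv_eq]

lemma pdIter_eqOn (hU : IsOpen U) {f g : (Fin d → ℝ) → ℝ} (h : Set.EqOn f g U)
    (j : Fin d) (n : ℕ) : Set.EqOn ((pd j)^[n] f) ((pd j)^[n] g) U := by
  induction n generalizing f g with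
  | zero => exact h
  | succ n ih =>
    rw [Function.iterate_succ_apply, Function.iterate_succ_apply]
    exact ih (pd_eqOn hU h j)

lemma mpdL_eqOn (hU : IsOpen U) (l : List (Fin d)) (ν : Fin d → ℕ)
    {f g : (Fin d → ℝ) → ℝ} (h : Set.EqOn f g U) :
    Set.EqOn (mpdL l ν f) (mpdL l ν g) U := by
  induction l with
  | nil => exact h
  | cons i l ih => exact pdIter_eqOn hU ih i (ν i)

lemma pd_sub_mul (hU : IsOpen U) {f g : (Fin d → ℝ) → ℝ} (hf : ContDiffOn ℝ (⊤ : ℕ∞) f U)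
    (hg : ContDiffOn ℝ (⊤ : ℕ∞) g U) (c : ℝ) (j : Fin d) :
    Set.EqOn (pd j (fun y => f y - c * g y)) (fun y => pd j f y - c * pd j g y) U := by
  intro x hx
  have hfd := diffAt_of hU hf hx
  have hgd := diffAt_of hU hg hx
  unfold pd
  rw [fderiv_fun_sub hfd (hgd.const_mul c), fderiv_const_mul hgd c]
  simp

lemma pdIter_sub_mul (hU : IsOpen U) (j : Fin d) (n : ℕ) {f g : (Fin d → ℝ) → ℝ}
    (hf : ContDiffOn ℝ (⊤ : ℕ∞) f U) (hg : ContDiffOn ℝ (⊤ : ℕ∞) g U) (c : ℝ) :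
    Set.EqOn ((pd j)^[n] (fun y => f y - c * g y))
      (fun y => (pd j)^[n] f y - c * (pd j)^[n] g y) U := by
  induction n generalizing f g with
  | zero => intro x hx; rfl
  | succ n ih =>
    intro x hx
    rw [Function.iterate_succ_apply, Function.iterate_succ_apply]
    have h1 := pdIter_eqOn hU (pd_sub_mul hU hf hg c j) j n hx
    rw [h1]
    have := ih (pd_contDiffOn hU hf j) (pd_contDiffOn hU hg j) hx
    rw [this]
    rfl

lemma mpdL_sub_mul (hU : IsOpen U) (l : List (Fin d)) (ν : Fin d → ℕ)
    {f g : (Fin d → ℝ) → ℝ} (hf : ContDiffOn ℝ (⊤ : ℕ∞) f U) (hg : ContDiffOn ℝ (⊤ : ℕ∞) g U) (c : ℝ) :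
    Set.EqOn (mpdL l ν (fun y => f y - c * g y))
      (fun y => mpdL l ν f y - c * mpdL l ν g y) U := by
  induction l with
  | nil => intro x hx; rfl
  | cons i l ih =>
    intro x hx
    show (pd i)^[ν i] (mpdL l ν fun y => f y - c * g y) x = _
    rw [pdIter_eqOn hU ih i (ν i) hx]
    exact pdIter_sub_mul hU i (ν i) (mpdL_contDiffOn hU l ν hf) (mpdL_contDiffOn hU l ν hg) c hx

lemma mpdL_index_congr (l : List (Fin d)) {ν ν' : Fin d → ℕ} (h : ∀ k ∈ l, ν k = ν' k)
    (f : (Fin d → ℝ) → ℝ) : mpdL l ν f = mpdL l ν' f := by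
  induction l with
  | nil => rfl
  | cons i l ih =>
    show (pd i)^[ν i] (mpdL l ν f) = (pd i)^[ν' i] (mpdL l ν' f)
    rw [h i List.mem_cons_self, ih (fun k hk => h k (List.mem_cons_of_mem _ hk))]

lemma mpdL_append (l : List (Fin d)) (i : Fin d) (ν : Fin d → ℕ) (f : (Fin d → ℝ) → ℝ) :
    mpdL (l ++ [i]) ν f = mpdL l ν ((pd i)^[ν i] f) := by
  unfold mpdL; rw [List.foldr_append]; rfl

lemma contDiffAt_zpow' {x : ℝ} (hx : x ≠ 0) (q : ℤ) {n : WithTop ℕ∞} :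
    ContDiffAt ℝ n (fun y : ℝ => y ^ q) x := by
  cases q with
  | ofNat k =>
    simp only [Int.ofNat_eq_coe, zpow_natCast]
    exact (contDiff_id.pow k).contDiffAt
  | negSucc k =>
    have h : (fun y : ℝ => y ^ (Int.negSucc k)) = fun y : ℝ => (y ^ (k + 1))⁻¹ := by
      funext y; rw [zpow_negSucc]
    rw [h]
    exact (contDiffAt_inv ℝ (pow_ne_zero _ hx)).comp x (contDiff_id.pow (k + 1)).contDiffAt

lemma contDiffAt_prodZpow (q : Fin d → ℤ) {x : Fin d → ℝ} (hx : ∀ j, x j ≠ 0)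
    {n : WithTop ℕ∞} : ContDiffAt ℝ n (fun z : Fin d → ℝ => ∏ k, z k ^ q k) x := by
  classical
  have H : ∀ s : Finset (Fin d), ContDiffAt ℝ n (fun z : Fin d → ℝ => ∏ k ∈ s, z k ^ q k) x := by
    intro s
    induction s using Finset.induction with
    | empty => simpa using contDiffAt_const
    | insert a s ha ih =>
      simp only [Finset.prod_insert ha]
      exact ((contDiffAt_zpow' (hx _) _).comp x
        ((ContinuousLinearMap.proj _ : (Fin d → ℝ) →L[ℝ] ℝ).contDiff.contDiffAt)).mul ih
  exact H Finset.univ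

lemma contDiffOn_prodZpow (hU0 : ∀ x ∈ U, ∀ j, x j ≠ 0)
    (q : Fin d → ℤ) : ContDiffOn ℝ (⊤ : ℕ∞) (fun z : Fin d → ℝ => ∏ k, z k ^ q k) U :=
  fun x hx => (contDiffAt_prodZpow q (hU0 x hx)).contDiffWithinAt

lemma pd_prodZpow (q : Fin d → ℤ) (i : Fin d) {x : Fin d → ℝ} (hx : ∀ j, x j ≠ 0) :
    pd i (fun z : Fin d → ℝ => ∏ k, z k ^ q k) x
      = (q i : ℝ) * (x i)⁻¹ * ∏ k, x k ^ q k := by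
  classical
  have h : ∀ k ∈ Finset.univ, HasFDerivAt (fun z : Fin d → ℝ => z k ^ q k)
      (((q k : ℝ) * x k ^ (q k - 1)) • (ContinuousLinearMap.proj k : (Fin d → ℝ) →L[ℝ] ℝ)) x := by
    intro k _
    have h1 : HasDerivAt (fun y : ℝ => y ^ q k) ((q k : ℝ) * x k ^ (q k - 1)) (x k) :=
      hasDerivAt_zpow (q k) (x k) (Or.inl (hx k))
    exact h1.comp_hasFDerivAt x ((ContinuousLinearMap.proj k : (Fin d → ℝ) →L[ℝ] ℝ).hasFDerivAt)
  have htot := HasFDerivAt.finset_prod h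
  unfold pd
  rw [htot.fderiv]
  rw [ContinuousLinearMap.sum_apply]
  rw [Finset.sum_eq_single i]
  · simp only [ContinuousLinearMap.smul_apply, ContinuousLinearMap.proj_apply,
      Pi.single_eq_same, smul_eq_mul]
    rw [← Finset.mul_prod_erase Finset.univ (fun k => x k ^ q k) (Finset.mem_univ i),
      zpow_sub_one₀ (hx i)]
    ring
  · intro k _ hk
    simp [ContinuousLinearMap.smul_apply, ContinuousLinearMap.proj_apply,
      Pi.single_eq_of_ne hk]
  · intro h; exact absurd (Finset.mem_univ i) h

lemma pd_mul {f g : (Fin d → ℝ) → ℝ} {x : Fin d → ℝ} (hf : DifferentiableAt ℝ f x)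
    (hg : DifferentiableAt ℝ g x) (i : Fin d) :
    pd i (fun z => f z * g z) x = pd i f x * g x + f x * pd i g x := by
  unfold pd
  rw [fderiv_fun_mul hf hg]
  simp only [ContinuousLinearMap.add_apply, ContinuousLinearMap.smul_apply, smul_eq_mul]
  ring

lemma key_eqOn (hU : IsOpen U) (hU0 : ∀ x ∈ U, ∀ j, x j ≠ 0)
    {G : (Fin d → ℝ) → ℝ} (hG : ContDiffOn ℝ (⊤ : ℕ∞) G U) (q q' : Fin d → ℤ) (i : Fin d)
    (hq' : ∀ k, q' k = q k - if k = i then 1 else 0) :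
    Set.EqOn (fun z => (∏ k, z k ^ q k) * pd i G z)
      (fun z => pd i (fun y => (∏ k, y k ^ q k) * G y) z
        - (q i : ℝ) * ((∏ k, z k ^ q' k) * G z)) U := by
  intro x hx
  have hxne := hU0 x hx
  have hPd : DifferentiableAt ℝ (fun z : Fin d → ℝ => ∏ k, z k ^ q k) x :=
    (contDiffAt_prodZpow q hxne (n := 1)).differentiableAt one_ne_zero
  have hGd : DifferentiableAt ℝ G x := diffAt_of hU hG hx
  simp only
  rw [pd_mul hPd hGd i, pd_prodZpow q i hxne]
  have hmid : (∏ k ∈ Finset.univ.erase i, x k ^ q' k)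
      = ∏ k ∈ Finset.univ.erase i, x k ^ q k :=
    Finset.prod_congr rfl fun k hk => by
      rw [hq' k, if_neg (Finset.ne_of_mem_erase hk), sub_zero]
  have hsplit : (∏ k, x k ^ q' k) = (x i)⁻¹ * ∏ k, x k ^ q k := by
    rw [← Finset.mul_prod_erase Finset.univ (fun k => x k ^ q' k) (Finset.mem_univ i),
        ← Finset.mul_prod_erase Finset.univ (fun k => x k ^ q k) (Finset.mem_univ i)]
    rw [hmid, hq' i, if_pos rfl, zpow_sub_one₀ (hxne i)]
    ring
  rw [hsplit]
  ring

lemma sum_reindex (i : Fin d) (ν : Fin d → ℕ) (n : ℕ) (hνi : ν i = n + 1)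
    (c' coef T : (Fin d → ℕ) → ℝ) :
    ∑ j ∈ Finset.Iic (Function.update ν i n),
        c' j * (T (Function.update j i (j i + 1)) - coef j * T j)
      = ∑ k ∈ Finset.Iic ν,
          ((if 1 ≤ k i then c' (Function.update k i (k i - 1)) else 0)
            - (if k i ≤ n then coef k * c' k else 0)) * T k := by
  classical
  have hsub : Finset.Iic (Function.update ν i n) ⊆ Finset.Iic ν := by
    apply Finset.Iic_subset_Iic.mpr
    intro r
    simp only [Function.update_apply]
    split_ifs with h
    · subst h; omega
    · exact le_refl _
  simp only [mul_sub, sub_mul, ite_mul, zero_mul]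
  rw [Finset.sum_sub_distrib, Finset.sum_sub_distrib]
  congr 1
  · rw [← Finset.sum_filter]
    apply Finset.sum_bij' (i := fun (j : Fin d → ℕ) (_ : j ∈ Finset.Iic (Function.update ν i n)) =>
        Function.update j i (j i + 1))
      (j := fun (k : Fin d → ℕ) (_ : k ∈ (Finset.Iic ν).filter fun k => 1 ≤ k i) =>
        Function.update k i (k i - 1))
    · intro j hj
      rw [Finset.mem_Iic, Pi.le_def] at hj
      rw [Finset.mem_filter, Finset.mem_Iic, Pi.le_def]
      have hji := hj i
      refine ⟨fun r => ?_, by simp⟩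
      have := hj r
      simp only [Function.update_apply] at this ⊢
      split_ifs with h
      · subst h; rw [Function.update_self] at hji; omega
      · rwa [if_neg h] at this
    · intro k hk
      rw [Finset.mem_filter, Finset.mem_Iic, Pi.le_def] at hk
      rw [Finset.mem_Iic, Pi.le_def]
      intro r
      have := hk.1 r
      have hki := hk.1 i
      simp only [Function.update_apply]
      split_ifs with h
      · subst h; omega
      · exact this
    · intro j hj
      funext r
      simp only [Function.update_apply]
      split_ifs with h
      · subst h; simp
      · rfl
    · intro k hk
      rw [Finset.mem_filter] at hk
      have := hk.2
      funext r
      simp only [Function.update_apply]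
      split_ifs with h
      · subst h; omega
      · rfl
    · intro j hj
      have h1 : Function.update (Function.update j i (j i + 1)) i
          (Function.update j i (j i + 1) i - 1) = j := by
        funext r
        simp only [Function.update_apply]
        split_ifs with h
        · subst h; simp
        · rfl
      rw [h1]
  · rw [← Finset.sum_subset hsub (fun k hk hk' => ?_)]
    · apply Finset.sum_congr rfl
      intro k hk
      rw [Finset.mem_Iic, Pi.le_def] at hk
      have hki := hk i
      rw [Function.update_self] at hki
      rw [if_pos hki]; ring
    · rw [Finset.mem_Iic, Pi.le_def] at hk
      rw [Finset.mem_Iic, Pi.le_def] at hk'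
      have : ¬ k i ≤ n := by
        intro h
        apply hk'
        intro r
        simp only [Function.update_apply]
        split_ifs with hri
        · subst hri; exact h
        · exact hk r
      rw [if_neg this]

end MonomialDerivHelpers


lemma monomial_deriv_main {d : ℕ} (l : List (Fin d)) : l.Nodup →
    ∀ (ν : Fin d → ℕ), (∀ k, k ∉ l → ν k = 0) → ∀ m : Fin d → ℤ,
    ∃ c : (Fin d → ℕ) → ℝ,
      ∀ (U : Set (Fin d → ℝ)), IsOpen U → (∀ x ∈ U, ∀ j, x j ≠ 0) →
        ∀ G : (Fin d → ℝ) → ℝ, ContDiffOn ℝ (⊤ : ℕ∞) G U →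
          ∀ x ∈ U,
            (∏ k, x k ^ (m k + (ν k : ℤ))) * mpdL l ν G x =
              ∑ j ∈ Finset.Iic ν, c j *
                mpdL l j (fun z => (∏ k, z k ^ (m k + (j k : ℤ))) * G z) x := by
  induction l using List.reverseRecOn with
  | nil =>
    intro _ ν hν m
    have hν0 : ν = 0 := funext fun k => hν k List.not_mem_nil
    subst hν0
    refine ⟨fun j => if j = 0 then 1 else 0, ?_⟩
    intro U hU hU0 G hG x hx
    have hIic : Finset.Iic (0 : Fin d → ℕ) = {0} := by
      ext j
      simp only [Finset.mem_Iic, Finset.mem_singleton]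
      constructor
      · intro h; funext k; exact Nat.le_zero.mp (h k)
      · rintro rfl; exact le_refl _
    rw [hIic, Finset.sum_singleton]
    simp [mpdL]
  | append_singleton l' i ih =>
    intro hl
    have hi : i ∉ l' := by
      simp only [List.nodup_append, List.nodup_singleton, List.disjoint_singleton] at hl
      exact fun h => hl.2.2 i h i (by simp) rfl
    have hl' : l'.Nodup := by
      simp only [List.nodup_append] at hl
      exact hl.1
    suffices H : ∀ (n : ℕ) (ν : Fin d → ℕ), ν i = n → (∀ k, k ∉ l' ++ [i] → ν k = 0) →
        ∀ m : Fin d → ℤ,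
        ∃ c : (Fin d → ℕ) → ℝ,
          ∀ (U : Set (Fin d → ℝ)), IsOpen U → (∀ x ∈ U, ∀ j, x j ≠ 0) →
            ∀ G : (Fin d → ℝ) → ℝ, ContDiffOn ℝ (⊤ : ℕ∞) G U →
              ∀ x ∈ U,
                (∏ k, x k ^ (m k + (ν k : ℤ))) * mpdL (l' ++ [i]) ν G x =
                  ∑ j ∈ Finset.Iic ν, c j *
                    mpdL (l' ++ [i]) j (fun z => (∏ k, z k ^ (m k + (j k : ℤ))) * G z) x by
      intro ν hν m; exact H (ν i) ν rfl hν m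
    intro n
    induction n with
    | zero =>
      intro ν hνi hν m
      obtain ⟨c, hc⟩ := ih hl' ν (fun k hk => by
        by_cases hki : k = i
        · exact hki ▸ hνi
        · exact hν k (by simp [hk, hki]) ) m
      refine ⟨c, ?_⟩
      intro U hU hU0 G hG x hx
      have e1 : mpdL (l' ++ [i]) ν G = mpdL l' ν G := by
        rw [mpdL_append, hνi, Function.iterate_zero_apply]
      rw [e1, hc U hU hU0 G hG x hx]
      apply Finset.sum_congr rfl
      intro j hj
      have hj0 : j i = 0 := by
        rw [Finset.mem_Iic, Pi.le_def] at hj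
        have := hj i; omega
      congr 1
      rw [mpdL_append, hj0, Function.iterate_zero_apply]
    | succ n ihn =>
      intro ν hνi hν m
      have hμi : Function.update ν i n i = n := Function.update_self i n ν
      have hμsupp : ∀ k, k ∉ l' ++ [i] → Function.update ν i n k = 0 := by
        intro k hk
        have hki : k ≠ i := by intro h; subst h; exact hk (by simp)
        rw [Function.update_of_ne hki]; exact hν k hk
      obtain ⟨c', hc'⟩ := ihn (Function.update ν i n) hμi hμsupp (Function.update m i (m i + 1))
      refine ⟨fun k => (if 1 ≤ k i then c' (Function.update k i (k i - 1)) else 0)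
          - (if k i ≤ n then ((m i + 1 + (k i : ℤ) : ℤ) : ℝ) * c' k else 0), ?_⟩
      intro U hU hU0 G hG x hx
      have hGpd : ContDiffOn ℝ (⊤ : ℕ∞) (pd i G) U := pd_contDiffOn hU hG i
      have e2 : (∏ k, x k ^ (m k + (ν k : ℤ)))
          = ∏ k, x k ^ (Function.update m i (m i + 1) k + ((Function.update ν i n k : ℕ) : ℤ)) := by
        apply Finset.prod_congr rfl
        intro k _
        congr 1
        rcases eq_or_ne k i with rfl | hk
        · rw [Function.update_self, Function.update_self, hνi]; push_cast; ring
        · rw [Function.update_of_ne hk, Function.update_of_ne hk]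
      have e1 : mpdL (l' ++ [i]) ν G = mpdL (l' ++ [i]) (Function.update ν i n) (pd i G) := by
        rw [mpdL_append, mpdL_append, hμi, hνi, Function.iterate_succ_apply,
          mpdL_index_congr l' (fun k hk =>
            (Function.update_of_ne (fun h : _ = i => hi (h ▸ hk)) n ν).symm) ((pd i)^[n] (pd i G))]
      rw [e2, e1, hc' U hU hU0 (pd i G) hGpd x hx]
      have hreindex := sum_reindex i ν n hνi c'
        (fun k => ((m i + 1 + (k i : ℤ) : ℤ) : ℝ))
        (fun k => mpdL (l' ++ [i]) k (fun z => (∏ r, z r ^ (m r + (k r : ℤ))) * G z) x)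
      rw [← hreindex]
      apply Finset.sum_congr rfl
      intro j hj
      beta_reduce
      congr 1
      have hq' : ∀ k, (m k + (j k : ℤ))
          = (Function.update m i (m i + 1) k + (j k : ℤ)) - (if k = i then 1 else 0) := by
        intro k
        rcases eq_or_ne k i with rfl | hk
        · rw [Function.update_self, if_pos rfl]; ring
        · rw [Function.update_of_ne hk, if_neg hk]; ring
      have hkey := key_eqOn hU hU0 hG
        (fun k => Function.update m i (m i + 1) k + (j k : ℤ))
        (fun k => m k + (j k : ℤ)) i hq'
      rw [mpdL_eqOn hU (l' ++ [i]) j hkey hx]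
      rw [mpdL_sub_mul hU (l' ++ [i]) j
        (pd_contDiffOn hU ((contDiffOn_prodZpow hU0 _).mul hG) i)
        ((contDiffOn_prodZpow hU0 _).mul hG) _ hx]
      have eA : mpdL (l' ++ [i]) j
          (pd i (fun y => (∏ k, y k ^ (Function.update m i (m i + 1) k + (j k : ℤ))) * G y))
          = mpdL (l' ++ [i]) (Function.update j i (j i + 1))
            (fun y => (∏ k, y k ^ (Function.update m i (m i + 1) k + (j k : ℤ))) * G y) := by
        rw [mpdL_append, mpdL_append, Function.update_self, ← Function.iterate_succ_apply,
          mpdL_index_congr l' (fun k hk =>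
            (Function.update_of_ne (fun h : _ = i => hi (h ▸ hk)) _ _).symm)]
      have eFq : (fun y : Fin d → ℝ =>
            (∏ k, y k ^ (Function.update m i (m i + 1) k + (j k : ℤ))) * G y)
          = fun y => (∏ k, y k ^ (m k + ((Function.update j i (j i + 1) k : ℕ) : ℤ))) * G y := by
        funext y
        congr 1
        apply Finset.prod_congr rfl
        intro k _
        congr 1
        rcases eq_or_ne k i with rfl | hk
        · rw [Function.update_self, Function.update_self]; push_cast; ring
        · rw [Function.update_of_ne hk, Function.update_of_ne hk]
      rw [eA, eFq]
      have ec : (Function.update m i (m i + 1) i + (j i : ℤ)) = (m i + 1 + (j i : ℤ)) := by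
        rw [Function.update_self]
      beta_reduce
      rw [ec]

/-- `x^{m+ν} G^{(ν)}(x)` is a linear combination of the functions
`(x^{m+j} G(x))^{(j)}`, `0 ≤ j ≤ ν`, for any `G` smooth on an open subset of
`(ℝ∖{0})^d`. -/
theorem monomial_deriv_linear_combination {d : ℕ} (m : ℤ) (ν : Fin d → ℕ) :
    ∃ c : (Fin d → ℕ) → ℝ,
      ∀ (U : Set (Fin d → ℝ)), IsOpen U → (∀ x ∈ U, ∀ j, x j ≠ 0) →
        ∀ G : (Fin d → ℝ) → ℝ, ContDiffOn ℝ (⊤ : ℕ∞) G U →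
          ∀ x ∈ U,
            (∏ i, x i ^ (m + (ν i : ℤ))) * mpd ν G x =
              ∑ j ∈ Finset.Iic ν, c j *
                mpd j (fun z => (∏ i, z i ^ (m + (j i : ℤ))) * G z) x := by
  obtain ⟨c, hc⟩ := monomial_deriv_main (List.finRange d) (List.nodup_finRange d) ν
    (fun k hk => absurd (List.mem_finRange k) hk) (fun _ => m)
  exact ⟨c, hc⟩
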